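/- arXiv:1708.04340 — 2 statements merged into one kernel-verified Lean document; each statement's English description precedes it below -/
import Mathlib

section
/- Let P be a very ample lattice polytope with invariants d_P, m_P, k_P defined as usual. Then m_P ≤ k_P. -/
open Finset Pointwise

noncomputable section

/-- Lattice points: `ZL N = ℤ^N`. -/
abbrev ZL (N : ℕ) := Fin N → ℤ

/-- Embedding of the lattice into `ℝ^N`. -/
def toR {N : ℕ} (x : ZL N) : Fin N → ℝ := fun i => (x i : ℝ)

/-- The lattice polytope spanned by a finite set `V` of lattice points. -/
def poly {N : ℕ} (V : Finset (ZL N)) : Set (Fin N → ℝ) :=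
  convexHull ℝ (toR '' (V : Set (ZL N)))

/-- The lattice points of the dilate `k • P`. -/
def latPts {N : ℕ} (V : Finset (ZL N)) (k : ℕ) : Set (ZL N) :=
  {x | toR x ∈ (k : ℝ) • poly V}

/-- `P` is `k`-normal: every lattice point of `kP` is a sum of `k` lattice points of `P`. -/
def kNormal {N : ℕ} (V : Finset (ZL N)) (k : ℕ) : Prop :=
  ∀ x ∈ latPts V k, ∃ f : Fin k → ZL N, (∀ i, f i ∈ latPts V 1) ∧ ∑ i, f i = x

/-- `P` is normal. -/
def NormalPoly {N : ℕ} (V : Finset (ZL N)) : Prop := ∀ k, 1 ≤ k → kNormal V k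

/-- The set of which `d_P` is the least element. -/
def dSet {N : ℕ} (V : Finset (ZL N)) : Set ℕ :=
  {n | 0 < n ∧ ∀ k ≥ n, latPts V (k + 1) = latPts V 1 + latPts V k}

/-- The set of which the `k`-normality threshold `k_P` is the least element. -/
def kSet {N : ℕ} (V : Finset (ZL N)) : Set ℕ :=
  {K | 0 < K ∧ ∀ k ≥ K, kNormal V k}

/-- The set of which `ν_P` is the least element. -/
def nuSet {N : ℕ} (V : Finset (ZL N)) : Set ℕ :=
  {n | 0 < n ∧ ∀ k ≥ n, latPts V (k + 1) = (V : Set (ZL N)) + latPts V k}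

/-- `v` is a vertex of `P`. -/
def IsVertex {N : ℕ} (V : Finset (ZL N)) (v : ZL N) : Prop :=
  v ∈ V ∧ toR v ∈ Set.extremePoints ℝ (poly V)

/-- `P` is very ample: for every vertex `v`, every lattice point of the cone
`ℝ_{≥0}(P - v)` is a finite sum of elements `w - v` with `w ∈ P ∩ M`. -/
def VeryAmple {N : ℕ} (V : Finset (ZL N)) : Prop :=
  ∀ v, IsVertex V v → ∀ u : ZL N,
    (∃ c : ℝ, 0 ≤ c ∧ ∃ p ∈ poly V, toR u = c • (p - toR v)) →
    ∃ (m : ℕ) (w : Fin m → ZL N), (∀ i, w i ∈ latPts V 1) ∧ u = ∑ i, (w i - v)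

/-- The set of numbers `m` such that `x - d_P v` is a sum of `m` elements of `(P ∩ M) - v`;
`σ(x, d_P v)` is its least element. -/
def sigmaSet {N : ℕ} (V : Finset (ZL N)) (dP : ℕ) (x v : ZL N) : Set ℕ :=
  {m | ∃ w : Fin m → ZL N, (∀ i, w i ∈ latPts V 1) ∧ x - dP • v = ∑ i, (w i - v)}

/-- The set of all values `σ(x, d_P v)`; `m_P` is its greatest element. -/
def mSet {N : ℕ} (V : Finset (ZL N)) (dP : ℕ) : Set ℕ :=
  {s | ∃ x ∈ latPts V dP, ∃ v, IsVertex V v ∧ IsLeast (sigmaSet V dP x v) s}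

end
lemma toR_add {N : ℕ} (a b : ZL N) : toR (a + b) = toR a + toR b := by
  funext i; simp [toR]

lemma toR_nsmul {N : ℕ} (n : ℕ) (v : ZL N) : toR (n • v) = (n : ℝ) • toR v := by
  funext i; simp [toR]

lemma add_mem_latPts {N : ℕ} (V : Finset (ZL N)) {a b : ZL N} {j k : ℕ}
    (ha : a ∈ latPts V j) (hb : b ∈ latPts V k) : a + b ∈ latPts V (j + k) := by
  show toR (a + b) ∈ ((j + k : ℕ) : ℝ) • poly V
  rw [toR_add]
  have h : ((j + k : ℕ) : ℝ) • poly V = ((j : ℕ) : ℝ) • poly V + ((k : ℕ) : ℝ) • poly V := by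
    rw [Nat.cast_add]
    exact (convex_convexHull ℝ _).add_smul (by positivity) (by positivity)
  rw [h]
  exact Set.add_mem_add ha hb

lemma nsmul_mem_latPts {N : ℕ} (V : Finset (ZL N)) {v : ZL N} (hv : v ∈ latPts V 1) (n : ℕ) :
    n • v ∈ latPts V n := by
  have hv' : toR v ∈ poly V := by
    have : toR v ∈ ((1 : ℕ) : ℝ) • poly V := hv
    rwa [Nat.cast_one, one_smul] at this
  show toR (n • v) ∈ ((n : ℕ) : ℝ) • poly V
  rw [toR_nsmul]
  exact Set.smul_mem_smul_set hv'

lemma sum_mem_latPts {N : ℕ} (V : Finset (ZL N)) :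
    ∀ k, 1 ≤ k → ∀ f : Fin k → ZL N, (∀ i, f i ∈ latPts V 1) → (∑ i, f i) ∈ latPts V k := by
  intro k
  induction k with
  | zero => omega
  | succ k ih =>
    intro _ f hf
    rcases Nat.eq_zero_or_pos k with hk | hk
    · subst hk
      simpa using hf 0
    · rw [Fin.sum_univ_succ f]
      have hrest := ih hk (fun i => f i.succ) (fun i => hf _)
      have := add_mem_latPts V (hf 0) hrest
      have he : 1 + k = k + 1 := by omega
      rwa [he] at this

/-- For a very ample lattice polytope `P`, `m_P ≤ k_P`. -/
theorem stmt4 {N : ℕ} (V : Finset (ZL N)) (dP kP mP : ℕ)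
    (hva : VeryAmple V)
    (hdP : IsLeast (dSet V) dP)
    (hkP : IsLeast (kSet V) kP)
    (hmP : IsGreatest (mSet V dP) mP) :
    mP ≤ kP := by
  obtain ⟨x, hx, v, hv, hls⟩ := hmP.1
  have hkpos : 0 < kP := hkP.1.1
  have hknorm := hkP.1.2
  have hkd : kP ∈ dSet V := by
    refine ⟨hkpos, fun k hk => ?_⟩
    ext y
    constructor
    · intro hy
      obtain ⟨f, hf, hsum⟩ := hknorm (k + 1) (by omega) y hy
      refine Set.mem_add.mpr ⟨f 0, hf 0, ∑ i : Fin k, f i.succ,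
        sum_mem_latPts V k (by omega) _ (fun i => hf _), ?_⟩
      rw [← hsum, Fin.sum_univ_succ]
    · intro hy
      obtain ⟨a, ha, b, hb, rfl⟩ := Set.mem_add.mp hy
      have h := add_mem_latPts V ha hb
      have he : 1 + k = k + 1 := by omega
      rwa [he] at h
  have hdk : dP ≤ kP := hdP.2 hkd
  apply hls.2
  have hv1 : v ∈ latPts V 1 := by
    show toR v ∈ ((1 : ℕ) : ℝ) • poly V
    rw [Nat.cast_one, one_smul]
    exact subset_convexHull ℝ _ ⟨v, hv.1, rfl⟩
  have hy : x + (kP - dP) • v ∈ latPts V kP := by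
    have h := add_mem_latPts V hx (nsmul_mem_latPts V hv1 (kP - dP))
    have he : dP + (kP - dP) = kP := by omega
    rwa [he] at h
  obtain ⟨w, hw, hsum⟩ := hknorm kP le_rfl _ hy
  refine ⟨w, hw, ?_⟩
  rw [Finset.sum_sub_distrib, hsum, Finset.sum_const, Finset.card_univ, Fintype.card_fin]
  have he : (kP - dP) • v + dP • v = kP • v := by
    rw [← add_nsmul]; congr 1; omega
  rw [← he]; abel
end

section
/- Let P_1, ..., P_n be very ample lattice polytopes such that P = P_1 ∪ ... ∪ P_n is a convex polytope. Then P is very ample and k_P ≤ max{k_{P_1}, ..., k_{P_n}}. -/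
open Finset Pointwise

/-
Each lattice point of `kP` lies in some `kP_i`, so once `k` exceeds every `k_{P_i}` it is a sum of
`k` lattice points of `P_i ⊆ P`; hence `P` is `k`-normal for all `k ≥ max k_{P_i}`. Eventual
`k`-normality gives very ampleness: for a lattice point `u = c (p - v)` of the cone at a vertex `v`
and `k ≥ c`, the point `u + k v = k ((c/k) p + (1 - c/k) v)` lies in `kP`, and writing it as a
sum of `k` lattice points `w_i` of `P` gives `u = ∑ (w_i - v)`.
-/

variable {N : ℕ}

theorem toR_add_nsmul (u v : ZL N) (k : ℕ) : toR (u + k • v) = toR u + (k : ℝ) • toR v := by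
  funext j
  simp [toR]

theorem latPts_eq_iUnion_of_poly_eq_iUnion {ι : Type*} {Vs : ι → Finset (ZL N)}
    {W : Finset (ZL N)} (hunion : poly W = ⋃ i, poly (Vs i)) (k : ℕ) :
    latPts W k = ⋃ i, latPts (Vs i) k := by
  ext x
  simp [latPts, hunion, Set.smul_set_iUnion]

theorem latPts_mono {V W : Finset (ZL N)} (h : poly V ⊆ poly W) (k : ℕ) :
    latPts V k ⊆ latPts W k := fun _ hx => Set.smul_set_mono h hx

theorem kNormal_of_poly_eq_iUnion {ι : Type*} {Vs : ι → Finset (ZL N)} {W : Finset (ZL N)}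
    (hunion : poly W = ⋃ i, poly (Vs i)) {k : ℕ} (hk : ∀ i, kNormal (Vs i) k) :
    kNormal W k := by
  intro x hx
  rw [latPts_eq_iUnion_of_poly_eq_iUnion hunion, Set.mem_iUnion] at hx
  obtain ⟨i, hi⟩ := hx
  obtain ⟨f, hf, hsum⟩ := hk i x hi
  have hsub : poly (Vs i) ⊆ poly W := hunion ▸ Set.subset_iUnion (fun j => poly (Vs j)) i
  exact ⟨f, fun j => latPts_mono hsub 1 (hf j), hsum⟩

theorem add_nsmul_mem_latPts {V : Finset (ZL N)} {u v : ZL N} {p : Fin N → ℝ} {c : ℝ} {k : ℕ}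
    (hv : toR v ∈ poly V) (hp : p ∈ poly V) (hc : 0 ≤ c) (hck : c ≤ k) (hk : 0 < k)
    (hu : toR u = c • (p - toR v)) : u + k • v ∈ latPts V k := by
  have hk' : (0 : ℝ) < k := Nat.cast_pos.mpr hk
  have hcomb : (c / k) • p + (1 - c / k) • toR v ∈ poly V :=
    convex_convexHull ℝ _ hp hv (by positivity)
      (sub_nonneg.mpr ((div_le_one hk').mpr hck)) (add_sub_cancel _ _)
  have heq : toR (u + k • v) = (k : ℝ) • ((c / k) • p + (1 - c / k) • toR v) := by
    rw [toR_add_nsmul, hu, smul_add, smul_smul, smul_smul, mul_div_cancel₀ _ hk'.ne',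
      mul_sub, mul_one, mul_div_cancel₀ _ hk'.ne', sub_smul, smul_sub]
    abel
  show toR (u + k • v) ∈ (k : ℝ) • poly V
  rw [heq]
  exact Set.smul_mem_smul_set hcomb

theorem veryAmple_of_kNormal {V : Finset (ZL N)} {K : ℕ} (hK : ∀ k ≥ K, kNormal V k) :
    VeryAmple V := by
  rintro v hv u ⟨c, hc, p, hp, hu⟩
  set k := K + ⌈c⌉₊ + 1
  have hck : c ≤ k := (Nat.le_ceil c).trans (by push_cast [k]; linarith)
  have hmem := add_nsmul_mem_latPts (extremePoints_subset hv.2) hp hc hck (Nat.succ_pos _) hu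
  obtain ⟨f, hf, hsum⟩ := hK k (by omega) _ hmem
  refine ⟨k, f, hf, ?_⟩
  rw [sum_sub_distrib, hsum, sum_const, card_univ, Fintype.card_fin, add_sub_cancel_right]

theorem stmt16_general {N n : ℕ} (hn : 0 < n)
    (Vs : Fin n → Finset (ZL N)) (W : Finset (ZL N)) (kv : Fin n → ℕ)
    (hkv : ∀ i, IsLeast (kSet (Vs i)) (kv i))
    (hunion : poly W = ⋃ i, poly (Vs i)) :
    VeryAmple W ∧
      ∃ kP, IsLeast (kSet W) kP ∧ kP ≤ Finset.univ.sup kv := by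
  set K := univ.sup kv
  have hnormal : ∀ k ≥ K, kNormal W k := fun k hk =>
    kNormal_of_poly_eq_iUnion hunion fun i => (hkv i).1.2 k ((le_sup (mem_univ i)).trans hk)
  have hK : K ∈ kSet W :=
    ⟨(hkv ⟨0, hn⟩).1.1.trans_le (le_sup (mem_univ _)), hnormal⟩
  exact ⟨veryAmple_of_kNormal hnormal, sInf (kSet W),
    ⟨Nat.sInf_mem ⟨K, hK⟩, fun _ hb => Nat.sInf_le hb⟩, Nat.sInf_le hK⟩

/-- If `P_1, …, P_n` are very ample lattice polytopes whose union
`P = P_1 ∪ ⋯ ∪ P_n` is a convex (lattice) polytope, then `P` is very ample and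
`k_P ≤ max {k_{P_1}, …, k_{P_n}}`. -/
theorem stmt16 {N n : ℕ} (hn : 0 < n)
    (Vs : Fin n → Finset (ZL N)) (W : Finset (ZL N)) (kv : Fin n → ℕ)
    (hva : ∀ i, VeryAmple (Vs i))
    (hkv : ∀ i, IsLeast (kSet (Vs i)) (kv i))
    (hunion : poly W = ⋃ i, poly (Vs i)) :
    VeryAmple W ∧
      ∃ kP, IsLeast (kSet W) kP ∧ kP ≤ Finset.univ.sup kv :=
  stmt16_general hn Vs W kv hkv hunion
end
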